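/- For a finite canonical ensemble with m ≥ 1 microstates and energies E : Fin m → ℝ, let Z(β) = Σ_i exp(−β E_i) and define the entropy as a function of absolute temperature T > 0 by Ŝ(T) = (d/dT)(T · ln Z(1/T)). Then for every T > 0, Ŝ is differentiable at T with Ŝ'(T) = σ(1/T)/T³, where σ(β) = Σ_i P_i(β) E_i² − (Σ_i P_i(β) E_i)²; in particular Ŝ'(T) ≥ 0, so the entropy is nondecreasing in the temperature. -/

import Mathlib

/-!
Write `Z(β) = ∑ᵢ exp(-β Eᵢ)` and `U(β) = ⟨E⟩_β`. Differentiating under the finite sum gives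
`(log Z)' = -U` and `U' = -σ`. Hence `d/dT (T log Z(1/T)) = log Z(1/T) + U(1/T)/T`, and
differentiating once more the two `U(1/T)/T²` terms cancel, leaving `σ(1/T)/T³`. The variance
`σ = ⟨E²⟩ - ⟨E⟩²` is nonnegative by Jensen's inequality for the square.
-/

open Real Finset Filter Topology

namespace CanonicalEnsemble

variable {ι : Type*} [Fintype ι] (E : ι → ℝ)

noncomputable def partitionFunction (β : ℝ) : ℝ := ∑ i, exp (-β * E i)

noncomputable def boltzmannProb (β : ℝ) (i : ι) : ℝ := exp (-β * E i) / partitionFunction E β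

noncomputable def meanEnergy (β : ℝ) : ℝ := ∑ i, boltzmannProb E β i * E i

noncomputable def energyVariance (β : ℝ) : ℝ :=
  ∑ i, boltzmannProb E β i * E i ^ 2 - meanEnergy E β ^ 2

lemma partitionFunction_pos [Nonempty ι] (β : ℝ) : 0 < partitionFunction E β :=
  sum_pos (fun _ _ => exp_pos _) univ_nonempty

lemma sum_boltzmannProb_mul (f : ι → ℝ) (β : ℝ) :
    ∑ i, boltzmannProb E β i * f i = (∑ i, f i * exp (-β * E i)) / partitionFunction E β := by
  simp only [boltzmannProb, div_mul_eq_mul_div, mul_comm (exp _), sum_div]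

lemma sum_boltzmannProb [Nonempty ι] (β : ℝ) : ∑ i, boltzmannProb E β i = 1 := by
  have h := sum_boltzmannProb_mul E (fun _ => 1) β
  simp only [mul_one, one_mul] at h
  rw [h]
  exact div_self (partitionFunction_pos E β).ne'

lemma boltzmannProb_nonneg (β : ℝ) (i : ι) : 0 ≤ boltzmannProb E β i :=
  div_nonneg (exp_pos _).le (sum_nonneg fun _ _ => (exp_pos _).le)

lemma energyVariance_nonneg [Nonempty ι] (β : ℝ) : 0 ≤ energyVariance E β := by
  rw [energyVariance, meanEnergy, sub_nonneg]
  simpa only [smul_eq_mul] using (even_two.convexOn_pow (𝕜 := ℝ)).map_sum_le (t := univ)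
    (fun i _ => boltzmannProb_nonneg E β i) (sum_boltzmannProb E β) (fun i _ => Set.mem_univ (E i))

lemma hasDerivAt_sum_mul_exp (f : ι → ℝ) (β : ℝ) :
    HasDerivAt (fun b => ∑ i, f i * exp (-b * E i)) (-∑ i, f i * E i * exp (-β * E i)) β := by
  rw [← sum_neg_distrib]
  refine HasDerivAt.fun_sum fun i _ => ?_
  have h : HasDerivAt (fun b => f i * exp (-b * E i)) (f i * (exp (-β * E i) * (-1 * E i))) β :=
    (((hasDerivAt_neg β).mul_const (E i)).exp).const_mul (f i)
  exact h.congr_deriv (by ring)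

lemma hasDerivAt_partitionFunction (β : ℝ) :
    HasDerivAt (partitionFunction E) (-∑ i, E i * exp (-β * E i)) β := by
  have h := hasDerivAt_sum_mul_exp E (fun _ => 1) β
  simp only [one_mul] at h
  exact h

lemma hasDerivAt_log_partitionFunction [Nonempty ι] (β : ℝ) :
    HasDerivAt (fun b => log (partitionFunction E b)) (-meanEnergy E β) β := by
  refine ((hasDerivAt_partitionFunction E β).log (partitionFunction_pos E β).ne').congr_deriv ?_
  rw [meanEnergy, sum_boltzmannProb_mul, neg_div]

lemma hasDerivAt_meanEnergy [Nonempty ι] (β : ℝ) :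
    HasDerivAt (meanEnergy E) (-energyVariance E β) β := by
  have hU : meanEnergy E = fun b => (∑ i, E i * exp (-b * E i)) / partitionFunction E b :=
    funext fun b => sum_boltzmannProb_mul E E b
  have hZ := (partitionFunction_pos E β).ne'
  rw [hU]
  refine ((hasDerivAt_sum_mul_exp E E β).div (hasDerivAt_partitionFunction E β) hZ).congr_deriv ?_
  simp only [energyVariance, meanEnergy, sum_boltzmannProb_mul, ← sq]
  generalize ∑ i, E i * exp (-β * E i) = Z₁
  generalize ∑ i, E i ^ 2 * exp (-β * E i) = Z₂
  field_simp
  ring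

lemma hasDerivAt_one_div {T : ℝ} (hT : T ≠ 0) :
    HasDerivAt (fun t : ℝ => 1 / t) (-1 / T ^ 2) T := by
  simpa only [one_div, neg_div] using hasDerivAt_inv hT

lemma hasDerivAt_mul_log_partitionFunction_inv [Nonempty ι] {T : ℝ} (hT : T ≠ 0) :
    HasDerivAt (fun t => t * log (partitionFunction E (1 / t)))
      (log (partitionFunction E (1 / T)) + meanEnergy E (1 / T) / T) T := by
  have hinv := hasDerivAt_one_div hT
  refine ((hasDerivAt_id' T).fun_mul
    ((hasDerivAt_log_partitionFunction E (1 / T)).comp T hinv)).congr_deriv ?_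
  simp only [Function.comp_apply]
  field_simp

lemma hasDerivAt_entropy [Nonempty ι] {T : ℝ} (hT : T ≠ 0) :
    HasDerivAt (fun t => log (partitionFunction E (1 / t)) + meanEnergy E (1 / t) / t)
      (energyVariance E (1 / T) / T ^ 3) T := by
  have hinv := hasDerivAt_one_div hT
  refine (((hasDerivAt_log_partitionFunction E (1 / T)).comp T hinv).fun_add
    (((hasDerivAt_meanEnergy E (1 / T)).comp T hinv).fun_div (hasDerivAt_id' T) hT)).congr_deriv ?_
  simp only [Function.comp_apply]
  field_simp
  ring

end CanonicalEnsemble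

open CanonicalEnsemble in
/-- For a finite canonical ensemble, the entropy as a function of absolute
temperature, `Ŝ(T) = ∂_T (T ln Z(1/T))`, is differentiable for `T > 0` with
`Ŝ'(T) = σ(1/T)/T³ ≥ 0`: the entropy is nondecreasing in the temperature. -/
theorem entropy_nondecreasing_in_temperature
    (m : ℕ) (hm : 1 ≤ m) (E : Fin m → ℝ) (T : ℝ) (hT : 0 < T) :
    HasDerivAt
      (fun T' : ℝ => deriv (fun T'' : ℝ =>
        T'' * Real.log (∑ i, Real.exp (-(1 / T'') * E i))) T')
      (((∑ i, (Real.exp (-(1 / T) * E i) / ∑ j, Real.exp (-(1 / T) * E j)) * E i ^ 2)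
        - (∑ i, (Real.exp (-(1 / T) * E i) / ∑ j, Real.exp (-(1 / T) * E j)) * E i) ^ 2)
        / T ^ 3) T ∧
    0 ≤ ((∑ i, (Real.exp (-(1 / T) * E i) / ∑ j, Real.exp (-(1 / T) * E j)) * E i ^ 2)
        - (∑ i, (Real.exp (-(1 / T) * E i) / ∑ j, Real.exp (-(1 / T) * E j)) * E i) ^ 2)
        / T ^ 3 := by
  have : Nonempty (Fin m) := Fin.pos_iff_nonempty.mp hm
  have hS : deriv (fun t => t * log (partitionFunction E (1 / t))) =ᶠ[𝓝 T]
      fun t => log (partitionFunction E (1 / t)) + meanEnergy E (1 / t) / t :=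
    (eventually_ne_nhds hT.ne').mono fun t ht =>
      (hasDerivAt_mul_log_partitionFunction_inv E ht).deriv
  exact ⟨(hasDerivAt_entropy E hT.ne').congr_of_eventuallyEq hS,
    div_nonneg (energyVariance_nonneg E _) (by positivity)⟩
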